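/- The functions B_1(x) = Im(x_1·conj(x_3)), B_2(x) = Im(x_2·conj(x_4)) and B_3(x) = x_1·conj(x_4) − conj(x_2)·x_3 on the period domain P satisfy: (i) B_i(Ax) = B_i(x) for every A ∈ SL(2,ℤ) and x ∈ P (i = 1,2,3); (ii) B_1(z̃) = Im z, B_2(z̃) = 0, B_3(z̃) = 1 for every z ∈ ℍ; (iii) for every x ∈ P and g = [[k_1,k_3],[0,k_2]] ∈ G_0: B_1(x·g) = B_1(x)·|k_1|², B_2(x·g) = B_1(x)·|k_3|² + B_2(x)·|k_2|² + Im(B_3(x)·k_3·conj(k_2)), and B_3(x·g) = B_3(x)·k_1·conj(k_2) + 2√(−1)·k_1·conj(k_3)·B_1(x). -/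

import Mathlib

open Complex

/-- `B₁(x) = Im(x₁ x̄₃)` on the period domain. -/
noncomputable def B₁ (x : Matrix (Fin 2) (Fin 2) ℂ) : ℝ :=
  (x 0 0 * (starRingEnd ℂ) (x 1 0)).im

/-- `B₂(x) = Im(x₂ x̄₄)` on the period domain. -/
noncomputable def B₂ (x : Matrix (Fin 2) (Fin 2) ℂ) : ℝ :=
  (x 0 1 * (starRingEnd ℂ) (x 1 1)).im

/-- `B₃(x) = x₁ x̄₄ − x̄₂ x₃` on the period domain. -/
noncomputable def B₃ (x : Matrix (Fin 2) (Fin 2) ℂ) : ℂ :=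
  x 0 0 * (starRingEnd ℂ) (x 1 1) - (starRingEnd ℂ) (x 0 1) * x 1 0

/-!
The three functions are the entries of the Gram matrix `xᵀ J x̄` of the columns of `x` for the
sesquilinear form `(u, w) ↦ u₀ w̄₁ − u₁ w̄₀`, where `J = !![0, 1; -1, 0]`: it equals
`!![2i B₁, B₃; -B̄₃, 2i B₂]`. A real matrix `A` satisfies `Aᵀ J A = det A • J`, so left
multiplication by `SL(2, ℤ)` leaves the Gram matrix unchanged, while right multiplication by `g`
turns it into `gᵀ (xᵀ J x̄) ḡ`; for upper triangular `g` its entries are the stated rules.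
-/

open Matrix

def symplecticJ (R : Type*) [CommRing R] : Matrix (Fin 2) (Fin 2) R := !![0, 1; -1, 0]

theorem transpose_mul_symplecticJ_mul {R : Type*} [CommRing R] (A : Matrix (Fin 2) (Fin 2) R) :
    Aᵀ * symplecticJ R * A = A.det • symplecticJ R := by
  ext i j
  fin_cases i <;> fin_cases j <;>
    simp only [symplecticJ, Fin.zero_eta, Fin.mk_one, Fin.isValue, mul_apply, transpose_apply,
      of_apply, cons_val', cons_val_fin_one, Fin.sum_univ_two, cons_val_zero, cons_val_one,
      det_fin_two, Matrix.smul_apply, smul_eq_mul] <;> ring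

noncomputable def periodGram (x : Matrix (Fin 2) (Fin 2) ℂ) : Matrix (Fin 2) (Fin 2) ℂ :=
  xᵀ * symplecticJ ℂ * x.map (starRingEnd ℂ)

theorem mul_conj_sub_mul_conj (u v : ℂ) :
    u * starRingEnd ℂ v - v * starRingEnd ℂ u = 2 * I * (u * starRingEnd ℂ v).im := by
  have h := sub_conj (u * starRingEnd ℂ v)
  simp only [map_mul, conj_conj] at h
  push_cast at h
  linear_combination h

theorem periodGram_apply (x : Matrix (Fin 2) (Fin 2) ℂ) (i j : Fin 2) :
    periodGram x i j = x 0 i * starRingEnd ℂ (x 1 j) - x 1 i * starRingEnd ℂ (x 0 j) := by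
  simp [periodGram, symplecticJ, mul_apply, Fin.sum_univ_two, sub_eq_neg_add]

theorem periodGram_eq (x : Matrix (Fin 2) (Fin 2) ℂ) :
    periodGram x = !![2 * I * B₁ x, B₃ x; -starRingEnd ℂ (B₃ x), 2 * I * B₂ x] := by
  ext i j
  fin_cases i <;> fin_cases j
  · simp [periodGram_apply, B₁, mul_conj_sub_mul_conj]
  · simp [periodGram_apply, B₃, mul_comm]
  · simp [periodGram_apply, B₃, mul_comm]
  · simp [periodGram_apply, B₂, mul_conj_sub_mul_conj]

theorem periodGram_real_mul (A : Matrix (Fin 2) (Fin 2) ℝ) (x : Matrix (Fin 2) (Fin 2) ℂ) :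
    periodGram (A.map ofReal * x) = (A.det : ℂ) • periodGram x := by
  have hA : (A.map ofReal).map (starRingEnd ℂ) = A.map ofReal := by ext; simp
  have hdet : (A.map ofReal).det = (A.det : ℂ) := (ofRealHom.map_det A).symm
  calc periodGram (A.map ofReal * x)
      = xᵀ * ((A.map ofReal)ᵀ * symplecticJ ℂ * A.map ofReal) * x.map (starRingEnd ℂ) := by
        simp only [periodGram, transpose_mul, Matrix.map_mul, hA, Matrix.mul_assoc]
    _ = (A.det : ℂ) • periodGram x := by
        rw [transpose_mul_symplecticJ_mul, hdet, Matrix.mul_smul, Matrix.smul_mul, periodGram]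

theorem periodGram_mul (x g : Matrix (Fin 2) (Fin 2) ℂ) :
    periodGram (x * g) = gᵀ * periodGram x * g.map (starRingEnd ℂ) := by
  simp [periodGram, transpose_mul, Matrix.map_mul, Matrix.mul_assoc]

theorem B_eq_of_periodGram_eq {x y : Matrix (Fin 2) (Fin 2) ℂ} (h : periodGram x = periodGram y) :
    B₁ x = B₁ y ∧ B₂ x = B₂ y ∧ B₃ x = B₃ y := by
  rw [periodGram_eq, periodGram_eq] at h
  refine ⟨?_, ?_, ?_⟩
  · simpa using congr_fun₂ h 0 0
  · simpa using congr_fun₂ h 1 1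
  · simpa using congr_fun₂ h 0 1

theorem periodGram_intCast_mul {A : Matrix (Fin 2) (Fin 2) ℤ} (hA : A.det = 1)
    (x : Matrix (Fin 2) (Fin 2) ℂ) : periodGram (A.map (Int.cast : ℤ → ℂ) * x) = periodGram x := by
  have hAℝ : A.map (Int.cast : ℤ → ℂ) = (A.map (Int.cast : ℤ → ℝ)).map ofReal := by ext; simp
  rw [hAℝ, periodGram_real_mul, ← Int.cast_det, hA]
  simp

theorem B₁_mul_upperTriangular (x : Matrix (Fin 2) (Fin 2) ℂ) (k₁ k₂ k₃ : ℂ) :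
    B₁ (x * !![k₁, k₃; 0, k₂]) = B₁ x * ‖k₁‖ ^ 2 := by
  have h : 2 * I * B₁ (x * !![k₁, k₃; 0, k₂]) = k₁ * (2 * I * B₁ x) * starRingEnd ℂ k₁ := by
    simpa [periodGram_eq, mul_apply, Fin.sum_univ_two] using
      congr_fun₂ (periodGram_mul x !![k₁, k₃; 0, k₂]) 0 0
  apply ofReal_injective
  apply mul_left_cancel₀ (mul_ne_zero two_ne_zero I_ne_zero)
  push_cast
  linear_combination h + 2 * I * B₁ x * mul_conj' k₁

theorem B₂_mul_upperTriangular (x : Matrix (Fin 2) (Fin 2) ℂ) (k₁ k₂ k₃ : ℂ) :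
    B₂ (x * !![k₁, k₃; 0, k₂]) =
      B₁ x * ‖k₃‖ ^ 2 + B₂ x * ‖k₂‖ ^ 2 + (B₃ x * k₃ * starRingEnd ℂ k₂).im := by
  have h : 2 * I * B₂ (x * !![k₁, k₃; 0, k₂]) =
      (k₃ * (2 * I * B₁ x) - k₂ * starRingEnd ℂ (B₃ x)) * starRingEnd ℂ k₃ +
        (k₃ * B₃ x + k₂ * (2 * I * B₂ x)) * starRingEnd ℂ k₂ := by
    simpa [periodGram_eq, mul_apply, Fin.sum_univ_two, sub_eq_add_neg] using
      congr_fun₂ (periodGram_mul x !![k₁, k₃; 0, k₂]) 1 1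
  have h_im := sub_conj (B₃ x * k₃ * starRingEnd ℂ k₂)
  simp only [map_mul, conj_conj] at h_im
  apply ofReal_injective
  apply mul_left_cancel₀ (mul_ne_zero two_ne_zero I_ne_zero)
  push_cast at h_im ⊢
  linear_combination h + 2 * I * B₁ x * mul_conj' k₃ + 2 * I * B₂ x * mul_conj' k₂ + h_im

theorem B₃_mul_upperTriangular (x : Matrix (Fin 2) (Fin 2) ℂ) (k₁ k₂ k₃ : ℂ) :
    B₃ (x * !![k₁, k₃; 0, k₂]) =
      B₃ x * k₁ * starRingEnd ℂ k₂ + 2 * I * k₁ * starRingEnd ℂ k₃ * (B₁ x : ℂ) := by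
  have h : B₃ (x * !![k₁, k₃; 0, k₂]) =
      k₁ * (2 * I * B₁ x) * starRingEnd ℂ k₃ + k₁ * B₃ x * starRingEnd ℂ k₂ := by
    simpa [periodGram_eq, mul_apply, Fin.sum_univ_two] using
      congr_fun₂ (periodGram_mul x !![k₁, k₃; 0, k₂]) 0 1
  linear_combination h

/-- the functions `B₁, B₂, B₃` on the period domain are `SL(2,ℤ)`-invariant,
restrict to `Im z, 0, 1` on the embedded upper half plane, and transform under the right
action of the Borel group `G₀` by the stated rules. -/
theorem B_properties :
    (∀ A : Matrix (Fin 2) (Fin 2) ℤ, A.det = 1 →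
      ∀ x : Matrix (Fin 2) (Fin 2) ℂ, x.det ≠ 0 →
        0 < (x 0 0 * (starRingEnd ℂ) (x 1 0)).im →
        B₁ (A.map (Int.cast : ℤ → ℂ) * x) = B₁ x ∧
        B₂ (A.map (Int.cast : ℤ → ℂ) * x) = B₂ x ∧
        B₃ (A.map (Int.cast : ℤ → ℂ) * x) = B₃ x) ∧
    (∀ z : ℂ, 0 < z.im →
      B₁ !![z, -1; 1, 0] = z.im ∧ B₂ !![z, -1; 1, 0] = 0 ∧ B₃ !![z, -1; 1, 0] = 1) ∧
    (∀ x : Matrix (Fin 2) (Fin 2) ℂ, x.det ≠ 0 →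
      0 < (x 0 0 * (starRingEnd ℂ) (x 1 0)).im →
      ∀ k₁ k₂ k₃ : ℂ, k₁ ≠ 0 → k₂ ≠ 0 →
        B₁ (x * !![k₁, k₃; 0, k₂]) = B₁ x * ‖k₁‖ ^ 2 ∧
        B₂ (x * !![k₁, k₃; 0, k₂]) =
          B₁ x * ‖k₃‖ ^ 2 + B₂ x * ‖k₂‖ ^ 2 +
            (B₃ x * k₃ * (starRingEnd ℂ) k₂).im ∧
        B₃ (x * !![k₁, k₃; 0, k₂]) =
          B₃ x * k₁ * (starRingEnd ℂ) k₂ +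
            2 * Complex.I * k₁ * (starRingEnd ℂ) k₃ * (B₁ x : ℂ)) := by
  refine ⟨fun A hA x _ _ => B_eq_of_periodGram_eq (periodGram_intCast_mul hA x),
    fun z _ => ⟨by simp [B₁], by simp [B₂], by simp [B₃]⟩,
    fun x _ _ k₁ k₂ k₃ _ _ => ⟨B₁_mul_upperTriangular x k₁ k₂ k₃,
      B₂_mul_upperTriangular x k₁ k₂ k₃, B₃_mul_upperTriangular x k₁ k₂ k₃⟩⟩
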